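/- arXiv:0910.2062 — 2 statements merged into one kernel-verified Lean document; each statement's English description precedes it below -/
import Mathlib

section
/- If sequences α, β, γ, δ satisfy β_L = Σ_{r=0}^L α_r u_{L-r} v_{L+r} and γ_L = Σ_{r=L}^∞ δ_r u_{r-L} v_{r+L} (with suitable absolute convergence), then Σ_{L=0}^∞ α_L γ_L = Σ_{L=0}^∞ β_L δ_L. -/
/-!
Both sides are the sum of the absolutely summable double series
`F (L, m) = α L * δ (L + m) * u m * v (2L + m)`: summing over `m` first gives `∑ α L * γ L`,
summing along the antidiagonals `L + m = n` gives `∑ β n * δ n`.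
-/

open Finset

theorem Summable.tsum_eq_tsum_sum_antidiagonal {A α : Type*} [AddCommMonoid A] [HasAntidiagonal A]
    [AddCommMonoid α] [TopologicalSpace α] [ContinuousAdd α] [T3Space α] {f : A × A → α}
    (hf : Summable f) : ∑' p, f p = ∑' n, ∑ p ∈ antidiagonal n, f p := by
  conv_rhs => congr; ext; rw [← sum_finset_coe, ← tsum_fintype (L := .unconditional _)]
  rw [← HasAntidiagonal.sigmaAntidiagonalEquivProd.tsum_eq f]
  exact (HasAntidiagonal.sigmaAntidiagonalEquivProd.summable_iff.mpr hf).tsum_sigma'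
    fun n ↦ (hasSum_fintype _).summable

/-- Bailey's transform. -/
theorem bailey_transform (u v α β γ δ : ℕ → ℂ)
    (hsum : Summable (fun p : ℕ × ℕ =>
      ‖α p.1 * (δ (p.1 + p.2) * u p.2 * v (p.1 + p.2 + p.1))‖))
    (hβ : ∀ L, β L = ∑ r ∈ Finset.range (L + 1), α r * u (L - r) * v (L + r))
    (hγ : ∀ L, γ L = ∑' m : ℕ, δ (L + m) * u m * v (L + m + L)) :
    ∑' L : ℕ, α L * γ L = ∑' L : ℕ, β L * δ L := by
  set F : ℕ × ℕ → ℂ := fun p => α p.1 * (δ (p.1 + p.2) * u p.2 * v (p.1 + p.2 + p.1))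
  have hF : Summable F := hsum.of_norm
  have hβ_antidiagonal (n : ℕ) : β n = ∑ p ∈ antidiagonal n, α p.1 * u p.2 * v (n + p.1) := by
    rw [hβ, Nat.sum_antidiagonal_eq_sum_range_succ (fun i j ↦ α i * u j * v (n + i))]
  calc ∑' L, α L * γ L = ∑' p, F p := by
        rw [hF.tsum_prod]
        exact tsum_congr fun L ↦ by rw [hγ, ← tsum_mul_left]
    _ = ∑' n, ∑ p ∈ antidiagonal n, F p := hF.tsum_eq_tsum_sum_antidiagonal
    _ = ∑' n, β n * δ n := tsum_congr fun n ↦ by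
        rw [hβ_antidiagonal, sum_mul]
        refine sum_congr rfl fun p hp ↦ ?_
        rw [HasAntidiagonal.mem_antidiagonal] at hp
        simp only [F, hp]
        ring
end

section
/- The sequences α_0 = 1, α_L = (-1)^L q^{L(3L-1)/2} (1 + q^L) for L ≥ 1, and β_L = 1/(q;q)_L form a Bailey pair relative to a = 1; that is, for all L ≥ 0, 1/(q;q)_L = Σ_{r=0}^L α_r / ((q;q)_{L-r} (q;q)_{L+r}). -/
/-- Finite q-shifted factorial `(q;q)_n`. -/
noncomputable def qp (q : ℂ) (n : ℕ) : ℂ := ∏ k ∈ Finset.range n, (1 - q ^ (k + 1))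

/-!
Write `T_L(r) = α_r / ((q;q)_{L-r} (q;q)_{L+r})`, with `1/(q;q)_n = 0` for `n < 0`. For every `r`,
`(1 - q^{L+1}) T_{L+1}(r) - T_L(r) = G(r+1) - G(r)`, where `G(0) = 0` and, for `r ≥ 1`,
`G(r) = (-1)^{r+1} q^{L+1 + 3 binom(r,2)} / ((q;q)_{L+1-r} (q;q)_{L+r})`; after clearing denominators
this is a polynomial identity in `q`. Since also `G(L+2) = 0`, summing over `r` gives
`(1 - q^{L+1}) β_{L+1} = β_L`, which together with `β_0 = 1` characterises `β_L = 1/(q;q)_L`.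
-/

open Finset

lemma pow_succ_ne_one_of_norm_lt_one {q : ℂ} (hq : ‖q‖ < 1) (n : ℕ) : q ^ (n + 1) ≠ 1 := by
  intro h
  have : ‖q‖ ^ (n + 1) < 1 := pow_lt_one₀ (norm_nonneg q) hq n.succ_ne_zero
  simp [← norm_pow, h] at this

lemma mul_three_mul_sub_one_div_two (r : ℕ) : r * (3 * r - 1) / 2 = 3 * r.choose 2 + r := by
  rw [Nat.choose_two_right]
  have heven : 2 ∣ r * (r - 1) := (Nat.even_mul_pred_self r).two_dvd
  have hexpand : r * (3 * r - 1) = 3 * (r * (r - 1)) + 2 * r := by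
    rcases r with _ | r
    · rfl
    · rw [show 3 * (r + 1) - 1 = 3 * r + 2 by omega, Nat.add_sub_cancel]; ring
  omega

lemma qp_succ (q : ℂ) (n : ℕ) : qp q (n + 1) = qp q n * (1 - q ^ (n + 1)) :=
  prod_range_succ _ _

-- Extending `1 / (q;q)_n` by zero to `n < 0` makes `qpInv_natCast_sub_one` hold for every `n`
-- and lets the Bailey sums run past `r = L`.
noncomputable def qpInv (q : ℂ) (n : ℤ) : ℂ := if n < 0 then 0 else (qp q n.toNat)⁻¹

noncomputable def rogersAlpha (q : ℂ) (r : ℕ) : ℂ :=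
  if r = 0 then 1 else (-1) ^ r * q ^ (r * (3 * r - 1) / 2) * (1 + q ^ r)

noncomputable def baileyTerm (q : ℂ) (L r : ℕ) : ℂ :=
  rogersAlpha q r * qpInv q ((L : ℤ) - r) * qpInv q ((L : ℤ) + r)

-- `baileyTelescoper q (L + 1) s` is `G(s + 1)` of the header.
noncomputable def baileyTelescoper (q : ℂ) (M s : ℕ) : ℂ :=
  (-1) ^ s * q ^ (M + 3 * (s + 1).choose 2) * qpInv q ((M : ℤ) - s - 1) * qpInv q ((M : ℤ) + s)

section

variable {q : ℂ}

lemma qpInv_of_neg {n : ℤ} (hn : n < 0) : qpInv q n = 0 := if_pos hn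

lemma qpInv_natCast (n : ℕ) : qpInv q n = (qp q n)⁻¹ := by simp [qpInv]

lemma baileyTerm_of_le {L r : ℕ} (h : r ≤ L) :
    baileyTerm q L r = rogersAlpha q r / (qp q (L - r) * qp q (L + r)) := by
  rw [baileyTerm, ← Nat.cast_sub h, ← Nat.cast_add, qpInv_natCast, qpInv_natCast, mul_assoc,
    ← mul_inv, div_eq_mul_inv]

lemma baileyTerm_of_lt {L r : ℕ} (h : L < r) : baileyTerm q L r = 0 := by
  rw [baileyTerm, qpInv_of_neg (by omega), mul_zero, zero_mul]

lemma baileyTelescoper_self (M : ℕ) : baileyTelescoper q M M = 0 := by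
  rw [baileyTelescoper, sub_self, zero_sub, qpInv_of_neg (by norm_num), mul_zero, zero_mul]

variable (hq : ∀ n : ℕ, q ^ (n + 1) ≠ 1)
include hq

lemma qpInv_natCast_sub_one (n : ℕ) : qpInv q (n - 1) = (1 - q ^ n) * qpInv q n := by
  cases n with
  | zero => simp [qpInv_of_neg]
  | succ n =>
    have hne : 1 - q ^ (n + 1) ≠ 0 := sub_ne_zero.mpr (hq n).symm
    rw [Nat.cast_succ, add_sub_cancel_right, qpInv_natCast, ← Nat.cast_succ, qpInv_natCast,
      qp_succ, mul_inv, mul_left_comm, mul_inv_cancel₀ hne, mul_one]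

lemma baileyTerm_telescope_zero (L : ℕ) :
    (1 - q ^ (L + 1)) * baileyTerm q (L + 1) 0 - baileyTerm q L 0 =
      baileyTelescoper q (L + 1) 0 := by
  have h := qpInv_natCast_sub_one hq (L + 1)
  rw [Nat.cast_succ, add_sub_cancel_right] at h
  simp only [baileyTerm, baileyTelescoper, rogersAlpha, if_pos, Nat.cast_zero, Nat.cast_succ,
    sub_zero, add_zero, add_sub_cancel_right, zero_add, Nat.choose_succ_self, h]
  ring

lemma baileyTerm_telescope_succ (a s : ℕ) :
    (1 - q ^ (a + s + 1)) * baileyTerm q (a + s + 1) (s + 1) - baileyTerm q (a + s) (s + 1) =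
      baileyTelescoper q (a + s + 1) (s + 1) - baileyTelescoper q (a + s + 1) s := by
  have hX := qpInv_natCast_sub_one hq a
  have hY := qpInv_natCast_sub_one hq (a + 2 * s + 2)
  rw [baileyTerm, baileyTerm, baileyTelescoper, baileyTelescoper,
    show ((a + s + 1 : ℕ) : ℤ) - (s + 1 : ℕ) = a by push_cast; ring,
    show ((a + s + 1 : ℕ) : ℤ) + (s + 1 : ℕ) = (a + 2 * s + 2 : ℕ) by push_cast; ring,
    show ((a + s : ℕ) : ℤ) - (s + 1 : ℕ) = a - 1 by push_cast; ring,
    show ((a + s : ℕ) : ℤ) + (s + 1 : ℕ) = (a + 2 * s + 2 : ℕ) - 1 by push_cast; ring,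
    show ((a + s + 1 : ℕ) : ℤ) - s - 1 = a by push_cast; ring,
    show ((a + s + 1 : ℕ) : ℤ) + s = (a + 2 * s + 2 : ℕ) - 1 by push_cast; ring, hX, hY]
  simp only [rogersAlpha, if_neg (Nat.succ_ne_zero s), mul_three_mul_sub_one_div_two,
    Nat.choose_succ_succ' (s + 1), Nat.choose_one_right]
  ring

lemma sum_baileyTerm_succ (L : ℕ) :
    (1 - q ^ (L + 1)) * ∑ r ∈ range (L + 2), baileyTerm q (L + 1) r =
      ∑ r ∈ range (L + 1), baileyTerm q L r := by
  have hextend : ∑ r ∈ range (L + 1), baileyTerm q L r = ∑ r ∈ range (L + 2), baileyTerm q L r := by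
    rw [sum_range_succ _ (L + 1), baileyTerm_of_lt (Nat.lt_succ_self L), add_zero]
  have hsucc : ∀ s ∈ range (L + 1),
      (1 - q ^ (L + 1)) * baileyTerm q (L + 1) (s + 1) - baileyTerm q L (s + 1) =
        baileyTelescoper q (L + 1) (s + 1) - baileyTelescoper q (L + 1) s := by
    intro s hs
    obtain ⟨a, rfl⟩ := Nat.exists_eq_add_of_le (Nat.lt_succ_iff.mp (mem_range.mp hs))
    rw [add_comm s a]
    exact baileyTerm_telescope_succ hq a s
  rw [hextend, mul_sum, ← sub_eq_zero, ← sum_sub_distrib, sum_range_succ',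
    baileyTerm_telescope_zero hq, sum_congr rfl hsucc, sum_range_sub, baileyTelescoper_self,
    zero_sub, neg_add_cancel]

theorem sum_baileyTerm (L : ℕ) : ∑ r ∈ range (L + 1), baileyTerm q L r = (qp q L)⁻¹ := by
  induction L with
  | zero => simp [baileyTerm, rogersAlpha, qpInv, qp]
  | succ L ih =>
    have hne : 1 - q ^ (L + 1) ≠ 0 := sub_ne_zero.mpr (hq L).symm
    apply mul_left_cancel₀ hne
    rw [sum_baileyTerm_succ hq, ih, ← qpInv_natCast, ← qpInv_natCast, ← qpInv_natCast_sub_one hq,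
      Nat.cast_succ, add_sub_cancel_right]

end

theorem rogers_bailey_pair_B1_general (q : ℂ) (hq1 : ‖q‖ < 1) (L : ℕ) :
    (1 : ℂ) / qp q L =
      ∑ r ∈ Finset.range (L + 1),
        (if r = 0 then (1 : ℂ)
          else (-1) ^ r * q ^ (r * (3 * r - 1) / 2) * (1 + q ^ r)) /
        (qp q (L - r) * qp q (L + r)) := by
  rw [one_div, ← sum_baileyTerm (pow_succ_ne_one_of_norm_lt_one hq1) L]
  exact sum_congr rfl fun r hr => baileyTerm_of_le (Nat.lt_succ_iff.mp (mem_range.mp hr))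

/-- Rogers' Bailey pair B(1) relative to `a = 1`. -/
theorem rogers_bailey_pair_B1 (q : ℂ) (hq0 : 0 < ‖q‖) (hq1 : ‖q‖ < 1) (L : ℕ) :
    (1 : ℂ) / qp q L =
      ∑ r ∈ Finset.range (L + 1),
        (if r = 0 then (1 : ℂ)
          else (-1) ^ r * q ^ (r * (3 * r - 1) / 2) * (1 + q ^ r)) /
        (qp q (L - r) * qp q (L + r)) :=
  rogers_bailey_pair_B1_general q hq1 L
end
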